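/- Let (b,c) be a connected graph over X with a cocompact group action G such that H = H_{b,c} is G-invariant, fix x₀ ∈ X, and let R ⊆ G be a normal subgroup. Then every harmonic extreme point k of 𝓚^R is Q(R)-multiplicative, with character γ_k(q) = k(q·x₀) for q ∈ Q(R). -/

import Mathlib

open MeasureTheory
open scoped BigOperators

noncomputable section

namespace GraphPaper

variable {X : Type*}

/-- The Schrödinger operator `H_{b,c}` of a graph `(b,c)` over `X`. -/
def schrodinger (b : X → X → ℝ) (c : X → ℝ) (f : X → ℝ) : X → ℝ :=
  fun x => (∑' y, b x y * (f x - f y)) + c x * f x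

/-- Membership of `f` in the domain of `H_{b,c}`. -/
def InDom (b : X → X → ℝ) (f : X → ℝ) : Prop :=
  ∀ x, Summable fun y => b x y * |f y|

/-- The graph `b` is connected: any two points are joined by a path of positive weights. -/
def Connected (b : X → X → ℝ) : Prop :=
  ∀ x y : X, Relation.ReflTransGen (fun u v => 0 < b u v) x y

/-- The degree `deg(x) = ∑_y b(x,y) + c(x)`. -/
def deg (b : X → X → ℝ) (c : X → ℝ) (x : X) : ℝ :=
  (∑' y, b x y) + c x

variable {G : Type*} [Group G] [MulAction G X]

/-- The shift `T_g f (x) = f (g⁻¹ x)`. -/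
def shift (g : G) (f : X → ℝ) : X → ℝ := fun x => f (g⁻¹ • x)

/-- `H_{b,c}` is invariant under the shifts by elements of a set `R ⊆ G`. -/
def HInvOn (b : X → X → ℝ) (c : X → ℝ) (R : Set G) : Prop :=
  ∀ g ∈ R, ∀ f : X → ℝ, InDom b f →
    InDom b (shift g f) ∧ schrodinger b c (shift g f) = shift g (schrodinger b c f)

/-- The action of `G` on `X` is cocompact: there is a finite `V` with `G V = X`. -/
def CocompactAction (G X : Type*) [Group G] [MulAction G X] : Prop :=
  ∃ V : Finset X, ∀ x : X, ∃ g : G, ∃ v ∈ V, x = g • v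

/-- The set `𝓗⁺` of nonnegative, not identically zero, harmonic functions. -/
def Hplus (b : X → X → ℝ) (c : X → ℝ) : Set (X → ℝ) :=
  {f | InDom b f ∧ schrodinger b c f = 0 ∧ (∀ x, 0 ≤ f x) ∧ f ≠ 0}

/-- The set `𝓚`: the closure of the normalized positive harmonic functions. -/
def Kset (b : X → X → ℝ) (c : X → ℝ) (x₀ : X) : Set (X → ℝ) :=
  closure {f : X → ℝ | f ∈ Hplus b c ∧ f x₀ = 1}

/-- The set `𝓚^R` of `R`-invariant elements of `𝓚`. -/
def KsetR (b : X → X → ℝ) (c : X → ℝ) (x₀ : X) (R : Set G) : Set (X → ℝ) :=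
  {f ∈ Kset b c x₀ | ∀ g ∈ R, shift g f = f}

/-- `f` is `G`-multiplicative with a character `γ ∈ Hom(G, ℝ_{>0})`. -/
def IsMultiplicative (G : Type*) [Group G] [MulAction G X] (f : X → ℝ) : Prop :=
  ∃ γ : G →* ℝ, (∀ g, 0 < γ g) ∧ ∀ g : G, shift g f = γ g⁻¹ • f

/-- `Q(R) = π⁻¹(Z(G/R))`, the preimage of the centre of `G/R`. -/
def Qsub (R : Subgroup G) [R.Normal] : Subgroup G :=
  (Subgroup.center (G ⧸ R)).comap (QuotientGroup.mk' R)

/-- The set `𝓜` of multiplicative elements of `𝓚`. -/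
def Mset (G : Type*) [Group G] [MulAction G X] (b : X → X → ℝ) (c : X → ℝ) (x₀ : X) :
    Set (X → ℝ) :=
  {f ∈ Kset b c x₀ | IsMultiplicative G f}

/-- The set `𝓚_λ` for the graph `(b, c - λ)`, i.e. for `λ`-harmonic functions. -/
def KsetLam (b : X → X → ℝ) (c : X → ℝ) (x₀ : X) (l : ℝ) : Set (X → ℝ) :=
  closure {f : X → ℝ | InDom b f ∧ (schrodinger b c f = fun x => l * f x) ∧
    (∀ x, 0 ≤ f x) ∧ f ≠ 0 ∧ f x₀ = 1}

/-- The set `𝓜_λ` of multiplicative elements of `𝓚_λ`. -/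
def MsetLam (G : Type*) [Group G] [MulAction G X] (b : X → X → ℝ) (c : X → ℝ) (x₀ : X)
    (l : ℝ) : Set (X → ℝ) :=
  {f ∈ KsetLam b c x₀ l | IsMultiplicative G f}


/-!
Let `q ∈ Q(R)`. Since `q` is central modulo `R` and `k` is `R`-invariant, `k(q⁻¹ g v) = k(g q⁻¹ v)`,
so cocompactness together with the Harnack inequality along the finitely many paths from `v` to
`q⁻¹ v` bounds the normalized shift `h = T_q k / k(q⁻¹ x₀)` by a multiple of `k`. Then
`k = ε h + (1 - ε) w` with `w ∈ 𝓚^R` for small `ε > 0`, and extremality forces `h = k`.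
-/

section Schrodinger

variable {b : X → X → ℝ} {c : X → ℝ}

theorem InDom.summable_mul (hb0 : ∀ x y, 0 ≤ b x y) {f : X → ℝ} (hf : InDom b f) (x : X) :
    Summable fun y => b x y * f y :=
  summable_abs_iff.mp <| (hf x).congr fun y => by rw [abs_mul, abs_of_nonneg (hb0 x y)]

theorem InDom.smul {f : X → ℝ} (hf : InDom b f) (a : ℝ) : InDom b (a • f) := fun x =>
  ((hf x).mul_left |a|).congr fun y => by
    simp only [Pi.smul_apply, smul_eq_mul, abs_mul]
    ring

theorem InDom.sub (hb0 : ∀ x y, 0 ≤ b x y) {f g : X → ℝ} (hf : InDom b f) (hg : InDom b g) :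
    InDom b (f - g) := fun x =>
  Summable.of_nonneg_of_le (fun y => mul_nonneg (hb0 x y) (abs_nonneg _))
    (fun y => by
      rw [← mul_add]
      exact mul_le_mul_of_nonneg_left (abs_sub (f y) (g y)) (hb0 x y))
    ((hf x).add (hg x))

theorem schrodinger_eq_deg_mul_sub_tsum (hb0 : ∀ x y, 0 ≤ b x y) (hbs : ∀ x, Summable (b x))
    {f : X → ℝ} (hf : InDom b f) (x : X) :
    schrodinger b c f x = deg b c x * f x - ∑' y, b x y * f y := by
  have hsplit : (fun y => b x y * (f x - f y)) = fun y => b x y * f x - b x y * f y := by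
    funext y
    ring
  rw [schrodinger, deg, hsplit, ((hbs x).mul_right (f x)).tsum_sub (hf.summable_mul hb0 x),
    tsum_mul_right]
  ring

theorem schrodinger_smul (a : ℝ) (f : X → ℝ) :
    schrodinger b c (a • f) = a • schrodinger b c f := by
  funext x
  have hfactor : (fun y => b x y * (a * f x - a * f y)) = fun y => a * (b x y * (f x - f y)) := by
    funext y
    ring
  simp only [schrodinger, Pi.smul_apply, smul_eq_mul, hfactor, tsum_mul_left]
  ring

theorem schrodinger_sub (hb0 : ∀ x y, 0 ≤ b x y) (hbs : ∀ x, Summable (b x))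
    {f g : X → ℝ} (hf : InDom b f) (hg : InDom b g) :
    schrodinger b c (f - g) = schrodinger b c f - schrodinger b c g := by
  funext x
  have hsplit : (fun y => b x y * (f - g) y) = fun y => b x y * f y - b x y * g y := by
    funext y
    simp only [Pi.sub_apply]
    ring
  rw [Pi.sub_apply, schrodinger_eq_deg_mul_sub_tsum hb0 hbs hf,
    schrodinger_eq_deg_mul_sub_tsum hb0 hbs hg,
    schrodinger_eq_deg_mul_sub_tsum hb0 hbs (hf.sub hb0 hg), hsplit,
    (hf.summable_mul hb0 x).tsum_sub (hg.summable_mul hb0 x), Pi.sub_apply]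
  ring

theorem tsum_mul_eq_deg_mul_of_harmonic (hb0 : ∀ x y, 0 ≤ b x y) (hbs : ∀ x, Summable (b x))
    {f : X → ℝ} (hf : InDom b f) (hharm : schrodinger b c f = 0) (x : X) :
    ∑' y, b x y * f y = deg b c x * f x := by
  have hx := congrFun hharm x
  rw [schrodinger_eq_deg_mul_sub_tsum hb0 hbs hf] at hx
  exact (sub_eq_zero.mp hx).symm

theorem exists_harnack_const (hb0 : ∀ x y, 0 ≤ b x y) (hbs : ∀ x, Summable (b x)) {v w : X}
    (hvw : Relation.ReflTransGen (fun u v => 0 < b u v) v w) :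
    ∃ C : ℝ, 0 ≤ C ∧ ∀ f : X → ℝ, InDom b f → schrodinger b c f = 0 →
      (∀ x, 0 ≤ f x) → f w ≤ C * f v := by
  induction hvw with
  | refl => exact ⟨1, zero_le_one, fun f _ _ _ => (one_mul _).ge⟩
  | @tail m w _ hmw ih =>
    obtain ⟨C, hC0, hC⟩ := ih
    refine ⟨max (deg b c m) 0 * C / b m w,
      div_nonneg (mul_nonneg (le_max_right _ _) hC0) hmw.le, fun f hdom hharm hf0 => ?_⟩
    have hstep : b m w * f w ≤ max (deg b c m) 0 * (C * f v) :=
      calc b m w * f w ≤ ∑' y, b m y * f y :=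
            (hdom.summable_mul hb0 m).le_tsum w fun y _ => mul_nonneg (hb0 m y) (hf0 y)
        _ = deg b c m * f m := tsum_mul_eq_deg_mul_of_harmonic hb0 hbs hdom hharm m
        _ ≤ max (deg b c m) 0 * f m := mul_le_mul_of_nonneg_right (le_max_left _ _) (hf0 m)
        _ ≤ max (deg b c m) 0 * (C * f v) :=
            mul_le_mul_of_nonneg_left (hC f hdom hharm hf0) (le_max_right _ _)
    rw [div_mul_eq_mul_div, le_div_iff₀ hmw]
    linarith

theorem pos_of_harmonic (hb0 : ∀ x y, 0 ≤ b x y) (hbs : ∀ x, Summable (b x))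
    (hconn : Connected b) {f : X → ℝ} (hdom : InDom b f) (hharm : schrodinger b c f = 0)
    (hf0 : ∀ x, 0 ≤ f x) {x₀ : X} (hx₀ : 0 < f x₀) (x : X) : 0 < f x := by
  obtain ⟨C, -, hC⟩ := exists_harnack_const hb0 hbs (hconn x x₀)
  refine (hf0 x).lt_of_ne fun hx => ?_
  have := hC f hdom hharm hf0
  rw [← hx, mul_zero] at this
  linarith

end Schrodinger

section Shift

variable {b : X → X → ℝ} {c : X → ℝ}

theorem shift_mul (g h : G) (f : X → ℝ) : shift g (shift h f) = shift (g * h) f := by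
  funext x
  simp [shift, mul_smul]

theorem HInvOn.shift_harmonic (hH : HInvOn b c (Set.univ : Set G)) {f : X → ℝ}
    (hdom : InDom b f) (hharm : schrodinger b c f = 0) (g : G) :
    InDom b (shift g f) ∧ schrodinger b c (shift g f) = 0 := by
  obtain ⟨hgdom, hgH⟩ := hH g (Set.mem_univ g) f hdom
  exact ⟨hgdom, by rw [hgH, hharm]; rfl⟩

variable {R : Subgroup G} [R.Normal]

theorem apply_smul_eq_of_mk_eq {f : X → ℝ} (hf : ∀ r ∈ R, shift r f = f) {a a' : G}
    (h : (a : G ⧸ R) = a') (z : X) : f (a • z) = f (a' • z) := by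
  have := congrFun (hf _ (QuotientGroup.eq_iff_div_mem.mp h)) (a • z)
  simpa [shift, smul_smul, div_eq_mul_inv, mul_assoc] using this.symm

theorem shift_invariant_of_invariant {f : X → ℝ} (hf : ∀ r ∈ R, shift r f = f) (g : G) :
    ∀ r ∈ R, shift r (shift g f) = shift g f := fun r hr => by
  funext x
  rw [shift_mul]
  refine apply_smul_eq_of_mk_eq hf ?_ x
  simp [hr]

theorem mk_mul_comm_of_mem_Qsub {q : G} (hq : q ∈ Qsub R) (g : G) :
    ((q * g : G) : G ⧸ R) = (g * q : G) := by
  simp only [QuotientGroup.mk_mul]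
  exact (Subgroup.mem_center_iff.mp (Subgroup.mem_comap.mp hq) g).symm

theorem exists_le_mul_of_mem_Qsub (hb0 : ∀ x y, 0 ≤ b x y) (hbs : ∀ x, Summable (b x))
    (hconn : Connected b) (hcocpt : CocompactAction G X) (hH : HInvOn b c (Set.univ : Set G))
    {f : X → ℝ} (hdom : InDom b f) (hharm : schrodinger b c f = 0) (hf0 : ∀ x, 0 ≤ f x)
    (hinv : ∀ r ∈ R, shift r f = f) {q : G} (hq : q ∈ Qsub R) :
    ∃ C : ℝ, 0 ≤ C ∧ ∀ x, f (q • x) ≤ C * f x := by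
  obtain ⟨V, hV⟩ := hcocpt
  choose C hC0 hC using fun v : X => exists_harnack_const (c := c) hb0 hbs (hconn v (q • v))
  refine ⟨∑ v ∈ V, C v, Finset.sum_nonneg fun v _ => hC0 v, fun x => ?_⟩
  obtain ⟨g, v, hv, rfl⟩ := hV x
  obtain ⟨hgdom, hgharm⟩ := hH.shift_harmonic hdom hharm g⁻¹
  have hvq := hC v _ hgdom hgharm fun y => hf0 _
  simp only [shift, inv_inv] at hvq
  calc f (q • g • v) = f (g • q • v) := by
        rw [smul_smul, smul_smul]
        exact apply_smul_eq_of_mk_eq hinv (mk_mul_comm_of_mem_Qsub hq g) v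
    _ ≤ C v * f (g • v) := hvq
    _ ≤ (∑ v ∈ V, C v) * f (g • v) :=
        mul_le_mul_of_nonneg_right (Finset.single_le_sum (fun i _ => hC0 i) hv) (hf0 _)

end Shift

section Extreme

variable {b : X → X → ℝ} {c : X → ℝ} {x₀ : X}

theorem apply_eq_one_and_nonneg_of_mem_Kset {f : X → ℝ} (hf : f ∈ Kset b c x₀) :
    f x₀ = 1 ∧ ∀ x, 0 ≤ f x := by
  have hsub : {g | g ∈ Hplus b c ∧ g x₀ = 1} ⊆ {g : X → ℝ | g x₀ = 1 ∧ ∀ x, 0 ≤ g x} :=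
    fun g hg => ⟨hg.2, hg.1.2.2.1⟩
  have hclosed : IsClosed {g : X → ℝ | g x₀ = 1 ∧ ∀ x, 0 ≤ g x} :=
    (isClosed_eq (continuous_apply x₀) continuous_const).inter
      (isClosed_le continuous_const continuous_id)
  exact closure_minimal hsub hclosed hf

theorem mem_KsetR {R : Set G} {f : X → ℝ} (hdom : InDom b f) (hharm : schrodinger b c f = 0)
    (hf0 : ∀ x, 0 ≤ f x) (hx₀ : f x₀ = 1) (hinv : ∀ g ∈ R, shift g f = f) :
    f ∈ KsetR b c x₀ R :=
  ⟨subset_closure ⟨⟨hdom, hharm, hf0, fun h => by simp [h] at hx₀⟩, hx₀⟩, hinv⟩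

theorem eq_of_le_mul_of_mem_extremePoints (hb0 : ∀ x y, 0 ≤ b x y) (hbs : ∀ x, Summable (b x))
    {R : Set G} {k h : X → ℝ} (hk : k ∈ Set.extremePoints ℝ (KsetR b c x₀ R))
    (hkdom : InDom b k) (hkharm : schrodinger b c k = 0)
    (hh : h ∈ KsetR b c x₀ R) (hhdom : InDom b h) (hhharm : schrodinger b c h = 0)
    {M : ℝ} (hM : 0 ≤ M) (hle : ∀ x, h x ≤ M * k x) : h = k := by
  obtain ⟨hkx₀, hk0⟩ := apply_eq_one_and_nonneg_of_mem_Kset hk.1.1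
  have hhx₀ : h x₀ = 1 := (apply_eq_one_and_nonneg_of_mem_Kset hh.1).1
  set ε : ℝ := (M + 2)⁻¹
  have hε0 : 0 < ε := by positivity
  have hε1 : 0 < 1 - ε := sub_pos.mpr (inv_lt_one_of_one_lt₀ (by linarith))
  have hεM : ε * M ≤ 1 := by
    rw [inv_mul_le_iff₀ (by positivity)]
    linarith
  have hεh : ∀ x, ε * h x ≤ k x := fun x =>
    calc ε * h x ≤ ε * (M * k x) := mul_le_mul_of_nonneg_left (hle x) hε0.le
      _ = (ε * M) * k x := by ring
      _ ≤ k x := mul_le_of_le_one_left (hk0 x) hεM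
  set w : X → ℝ := (1 - ε)⁻¹ • (k - ε • h) with hw
  have hwK : w ∈ KsetR b c x₀ R := by
    refine mem_KsetR ((hkdom.sub hb0 (hhdom.smul ε)).smul _) ?_ (fun x => ?_) ?_ fun g hg => ?_
    · rw [hw, schrodinger_smul, schrodinger_sub hb0 hbs hkdom (hhdom.smul ε), schrodinger_smul,
        hkharm, hhharm]
      simp
    · exact mul_nonneg (inv_nonneg.mpr hε1.le) (sub_nonneg.mpr (hεh x))
    · simp only [w, Pi.smul_apply, Pi.sub_apply, smul_eq_mul, hkx₀, hhx₀]
      field_simp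
    · funext x
      have hkg := congrFun (hk.1.2 g hg) x
      have hhg := congrFun (hh.2 g hg) x
      simp only [shift] at hkg hhg
      simp only [shift, w, Pi.smul_apply, Pi.sub_apply, smul_eq_mul, hkg, hhg]
  refine hk.2 hh hwK ⟨ε, 1 - ε, hε0, hε1, by ring, ?_⟩
  funext x
  simp only [w, Pi.add_apply, Pi.smul_apply, Pi.sub_apply, smul_eq_mul]
  field_simp
  ring

theorem shift_eq_mul_of_mem_extremePoints (hb0 : ∀ x y, 0 ≤ b x y) (hbs : ∀ x, Summable (b x))
    (hconn : Connected b) (hcocpt : CocompactAction G X) (hH : HInvOn b c (Set.univ : Set G))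
    {R : Subgroup G} [R.Normal] {k : X → ℝ}
    (hk : k ∈ Set.extremePoints ℝ (KsetR b c x₀ (R : Set G)))
    (hdom : InDom b k) (hharm : schrodinger b c k = 0) {q : G} (hq : q ∈ Qsub R) :
    shift q k = fun x => k (q⁻¹ • x₀) * k x := by
  obtain ⟨hkx₀, hk0⟩ := apply_eq_one_and_nonneg_of_mem_Kset hk.1.1
  have hkinv : ∀ r ∈ R, shift r k = k := hk.1.2
  have ha : 0 < k (q⁻¹ • x₀) := pos_of_harmonic hb0 hbs hconn hdom hharm hk0 (hkx₀ ▸ one_pos) _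
  obtain ⟨hqdom, hqharm⟩ := hH.shift_harmonic hdom hharm q
  obtain ⟨C, hC0, hC⟩ :=
    exists_le_mul_of_mem_Qsub hb0 hbs hconn hcocpt hH hdom hharm hk0 hkinv (inv_mem hq)
  have hnorm : (k (q⁻¹ • x₀))⁻¹ • shift q k = k := by
    refine eq_of_le_mul_of_mem_extremePoints hb0 hbs hk hdom hharm ?_ (hqdom.smul _)
      (by rw [schrodinger_smul, hqharm, smul_zero]) (M := (k (q⁻¹ • x₀))⁻¹ * C) (by positivity)
      fun x => ?_
    · refine mem_KsetR (hqdom.smul _) (by rw [schrodinger_smul, hqharm, smul_zero])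
        (fun x => mul_nonneg (inv_nonneg.mpr ha.le) (hk0 _)) (inv_mul_cancel₀ ha.ne')
        fun r hr => ?_
      change (k (q⁻¹ • x₀))⁻¹ • shift r (shift q k) = _
      rw [shift_invariant_of_invariant hkinv q r hr]
    · calc (k (q⁻¹ • x₀))⁻¹ * k (q⁻¹ • x) ≤ (k (q⁻¹ • x₀))⁻¹ * (C * k x) :=
            mul_le_mul_of_nonneg_left (hC x) (inv_nonneg.mpr ha.le)
        _ = _ := by ring
  funext x
  rw [← congrFun hnorm x]
  exact (mul_inv_cancel_left₀ ha.ne' _).symm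

end Extreme

theorem extremePoint_Qsub_multiplicative_general {X : Type*} {G : Type*} [Group G]
    [MulAction G X] (b : X → X → ℝ) (c : X → ℝ)
    (hb0 : ∀ x y, 0 ≤ b x y) (hbs : ∀ x, Summable (b x))
    (hconn : Connected b) (hcocpt : CocompactAction G X)
    (hH : HInvOn b c (Set.univ : Set G)) (x₀ : X)
    (R : Subgroup G) [R.Normal]
    (k : X → ℝ) (hk : k ∈ Set.extremePoints ℝ (KsetR b c x₀ (R : Set G)))
    (hdom : InDom b k) (hharm : schrodinger b c k = 0) :
    (∀ q ∈ Qsub R, 0 < k (q • x₀)) ∧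
    (∀ q ∈ Qsub R, ∀ p ∈ Qsub R, k ((q * p) • x₀) = k (q • x₀) * k (p • x₀)) ∧
    (∀ q ∈ Qsub R, shift q k = fun x => k (q⁻¹ • x₀) * k x) := by
  obtain ⟨hkx₀, hk0⟩ := apply_eq_one_and_nonneg_of_mem_Kset hk.1.1
  have hshift : ∀ q ∈ Qsub R, shift q k = fun x => k (q⁻¹ • x₀) * k x := fun q hq =>
    shift_eq_mul_of_mem_extremePoints hb0 hbs hconn hcocpt hH hk hdom hharm hq
  refine ⟨fun q _ => pos_of_harmonic hb0 hbs hconn hdom hharm hk0 (hkx₀ ▸ one_pos) _,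
    fun q hq p _ => ?_, hshift⟩
  simpa [shift, mul_smul] using congrFun (hshift q⁻¹ (inv_mem hq)) (p • x₀)

/-- Every harmonic extreme point `k` of `𝓚^R` is `Q(R)`-multiplicative
with character `γ_k(q) = k(q • x₀)`. -/
theorem extremePoint_Qsub_multiplicative {X : Type*} [Countable X] {G : Type*} [Group G]
    [MulAction G X] (b : X → X → ℝ) (c : X → ℝ)
    (hb0 : ∀ x y, 0 ≤ b x y) (hbd : ∀ x, b x x = 0) (hbs : ∀ x, Summable (b x))
    (hconn : Connected b) (hcocpt : CocompactAction G X)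
    (hH : HInvOn b c (Set.univ : Set G)) (x₀ : X)
    (R : Subgroup G) [R.Normal]
    (k : X → ℝ) (hk : k ∈ Set.extremePoints ℝ (KsetR b c x₀ (R : Set G)))
    (hdom : InDom b k) (hharm : schrodinger b c k = 0) :
    (∀ q ∈ Qsub R, 0 < k (q • x₀)) ∧
    (∀ q ∈ Qsub R, ∀ p ∈ Qsub R, k ((q * p) • x₀) = k (q • x₀) * k (p • x₀)) ∧
    (∀ q ∈ Qsub R, shift q k = fun x => k (q⁻¹ • x₀) * k x) :=
  extremePoint_Qsub_multiplicative_general b c hb0 hbs hconn hcocpt hH x₀ R k hk hdom hharm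

end GraphPaper
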